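/- arXiv:1912.00564 — 6 statements merged into one kernel-verified Lean document; each statement's English description precedes it below -/
import Mathlib

section
/- Let p ∈ (1,∞) and let (X,d_X), (Y,d_Y) be finite nonempty metric spaces with |X| = m and |Y| = n. Then inf over correspondences R of sup_{(x,y),(x',y')∈R} | d_X^{(p)}(x,x') − d_Y^{(p)}(y,y') | ≤ (max(m,n) − 1)^{1/p} · inf over correspondences R of sup_{(x,y),(x',y')∈R} | d_X(x,x') − d_Y(y,y') |; equivalently, for the canonical projection 𝔖_p to p-metric spaces, d_GH(𝔖_p X, 𝔖_p Y) ≤ (max(m,n) − 1)^{1/p} · d_GH(X,Y). -/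
noncomputable section

/-- A correspondence between `X` and `Y`. -/
def IsCorrespondence {X Y : Type*} (R : Set (X × Y)) : Prop :=
  (∀ x : X, ∃ y : Y, (x, y) ∈ R) ∧ ∀ y : Y, ∃ x : X, (x, y) ∈ R

/-- The `p`-chain construction `d^{(p)}`: the infimum over finite chains
`x = x_0, x_1, …, x_k = x'` of `(Σ_i d(x_i, x_{i+1})^p)^(1/p)`. -/
def chainP {X : Type*} [MetricSpace X] (p : ℝ) (x x' : X) : ℝ :=
  sInf {r : ℝ | ∃ n : ℕ, ∃ c : ℕ → X, c 0 = x ∧ c n = x' ∧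
    (∑ i ∈ Finset.range n, dist (c i) (c (i + 1)) ^ p) ^ (1 / p) = r}

namespace ChainPAux

variable {X : Type*} [MetricSpace X]

def chainSet (p : ℝ) (x x' : X) : Set ℝ :=
  {r : ℝ | ∃ n : ℕ, ∃ c : ℕ → X, c 0 = x ∧ c n = x' ∧
    (∑ i ∈ Finset.range n, dist (c i) (c (i + 1)) ^ p) ^ (1 / p) = r}

lemma chainP_eq (p : ℝ) (x x' : X) : chainP p x x' = sInf (chainSet p x x') := rfl

lemma chainSet_nonempty (p : ℝ) (x x' : X) : (chainSet p x x').Nonempty := by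
  refine ⟨_, 1, fun i => if i = 0 then x else x', by simp, by simp, rfl⟩

lemma chainSet_nonneg (p : ℝ) (x x' : X) : ∀ r ∈ chainSet p x x', (0:ℝ) ≤ r := by
  rintro r ⟨n, c, _, _, rfl⟩
  exact Real.rpow_nonneg (Finset.sum_nonneg fun i _ => Real.rpow_nonneg dist_nonneg _) _

lemma chainSet_bddBelow (p : ℝ) (x x' : X) : BddBelow (chainSet p x x') :=
  ⟨0, fun r hr => chainSet_nonneg p x x' r hr⟩

lemma chainP_nonneg (p : ℝ) (x x' : X) : 0 ≤ chainP p x x' :=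
  le_csInf (chainSet_nonempty p x x') (chainSet_nonneg p x x')

lemma chainP_le (p : ℝ) {x x' : X} {n : ℕ} {c : ℕ → X} (h0 : c 0 = x) (hn : c n = x') :
    chainP p x x' ≤ (∑ i ∈ Finset.range n, dist (c i) (c (i + 1)) ^ p) ^ (1 / p) :=
  csInf_le (chainSet_bddBelow p x x') ⟨n, c, h0, hn, rfl⟩

lemma chainP_self {p : ℝ} (hp : p ≠ 0) (x : X) : chainP p x x ≤ 0 := by
  have h := chainP_le (x := x) (x' := x) p (n := 0) (c := fun _ => x) rfl rfl
  rwa [Finset.range_zero, Finset.sum_empty, Real.zero_rpow (one_div_ne_zero hp)] at h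

lemma chainP_le_dist {p : ℝ} (hp : 0 < p) (x x' : X) : chainP p x x' ≤ dist x x' := by
  have h := chainP_le (x := x) (x' := x') p (n := 1)
    (c := fun i => if i = 0 then x else x') (by simp) (by simp)
  rw [Finset.sum_range_one] at h
  simp only [reduceIte, one_ne_zero] at h
  rwa [← Real.rpow_mul dist_nonneg, mul_one_div_cancel (ne_of_gt hp), Real.rpow_one] at h

/-- Any chain can be shortened to one with at most `card X - 1` steps without
increasing the sum of `p`-th powers of the step distances. -/
lemma shorten [Fintype X] {p : ℝ} (hp : 0 ≤ p) :
    ∀ (nn : ℕ) (c : ℕ → X), ∃ k, k + 1 ≤ Fintype.card X ∧ ∃ c' : ℕ → X,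
      c' 0 = c 0 ∧ c' k = c nn ∧
      (∑ i ∈ Finset.range k, dist (c' i) (c' (i + 1)) ^ p) ≤
        ∑ i ∈ Finset.range nn, dist (c i) (c (i + 1)) ^ p := by
  intro nn
  induction nn using Nat.strong_induction_on with
  | _ nn IH =>
  intro c
  by_cases hcard : nn + 1 ≤ Fintype.card X
  · exact ⟨nn, hcard, c, rfl, rfl, le_refl _⟩
  · obtain ⟨i, hi, j, hj, hij, hcij⟩ :
        ∃ i ∈ Finset.range (nn + 1), ∃ j ∈ Finset.range (nn + 1), i ≠ j ∧ c i = c j := by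
      apply Finset.exists_ne_map_eq_of_card_lt_of_maps_to (t := (Finset.univ : Finset X))
      · simpa using by omega
      · intro a _; exact Finset.mem_univ _
    simp only [Finset.mem_range] at hi hj
    -- wlog i < j
    obtain ⟨i, j, hilt, hjle, hcij⟩ : ∃ i j : ℕ, i < j ∧ j ≤ nn ∧ c i = c j := by
      rcases lt_or_gt_of_ne hij with h | h
      · exact ⟨i, j, h, by omega, hcij⟩
      · exact ⟨j, i, h, by omega, hcij.symm⟩
    set c2 : ℕ → X := fun l => if l < i then c l else c (l + (j - i)) with hc2
    have hlt : nn - (j - i) < nn := by omega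
    obtain ⟨k, hk, c', h0, hk', hsum⟩ := IH (nn - (j - i)) hlt c2
    refine ⟨k, hk, c', ?_, ?_, le_trans hsum ?_⟩
    · rw [h0, hc2]
      by_cases h0i : 0 < i
      · simp [h0i]
      · have hi0 : i = 0 := by omega
        simp only [if_neg (by omega : ¬ (0:ℕ) < i)]
        have : 0 + (j - i) = j := by omega
        rw [this, ← hcij, hi0]
    · rw [hk', hc2]
      have h1 : ¬ (nn - (j - i) < i) := by omega
      have h2 : nn - (j - i) + (j - i) = nn := by omega
      simp only [if_neg h1, h2]
    · -- sum over shortened chain c2 is ≤ sum over c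
      have hsplit : nn - (j - i) = i + (nn - j) := by omega
      have hsplit' : nn = j + (nn - j) := by omega
      rw [hsplit, Finset.sum_range_add]
      conv_rhs => rw [hsplit', Finset.sum_range_add]
      apply add_le_add
      · -- first block: terms agree for l < i, then extend to range j
        have heq : ∑ l ∈ Finset.range i, dist (c2 l) (c2 (l + 1)) ^ p
            = ∑ l ∈ Finset.range i, dist (c l) (c (l + 1)) ^ p := by
          apply Finset.sum_congr rfl
          intro l hl
          rw [Finset.mem_range] at hl
          have e1 : c2 l = c l := by rw [hc2]; simp [hl]
          have e2 : c2 (l + 1) = c (l + 1) := by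
            rw [hc2]
            by_cases h : l + 1 < i
            · simp [h]
            · have hli : l + 1 = i := by omega
              simp only [if_neg h]
              have : l + 1 + (j - i) = j := by omega
              rw [this, ← hcij, hli]
          rw [e1, e2]
        rw [heq]
        apply Finset.sum_le_sum_of_subset_of_nonneg
        · exact Finset.range_subset_range.mpr (by omega)
        · intro l _ _; exact Real.rpow_nonneg dist_nonneg _
      · -- second block: shifted terms agree
        apply le_of_eq
        apply Finset.sum_congr rfl
        intro l _
        have e1 : c2 (i + l) = c (j + l) := by
          rw [hc2]
          simp only [if_neg (by omega : ¬ i + l < i)]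
          congr 1; omega
        have e2 : c2 (i + l + 1) = c (j + l + 1) := by
          rw [hc2]
          simp only [if_neg (by omega : ¬ i + l + 1 < i)]
          congr 1; omega
        rw [e1, e2]

/-- The key one-sided estimate. -/
lemma key {X Y : Type*} [MetricSpace X] [MetricSpace Y] [Fintype Y]
    {p : ℝ} (hp : 1 < p) {C D : ℝ} (hD : 0 ≤ D)
    (hC : ((Fintype.card Y : ℝ) - 1) ^ (1 / p) ≤ C)
    (hC1 : 1 ≤ C ∨ Subsingleton X)
    (R : Set (X × Y)) (hR : IsCorrespondence R)
    (hdis : ∀ a ∈ R, ∀ b ∈ R, |dist a.1 b.1 - dist a.2 b.2| ≤ D)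
    {x x' : X} {y y' : Y} (hx : (x, y) ∈ R) (hx' : (x', y') ∈ R) :
    chainP p x x' ≤ chainP p y y' + C * D := by
  have hp0 : 0 < p := lt_trans one_pos hp
  have hp0' : p ≠ 0 := ne_of_gt hp0
  have h1p : 0 ≤ 1 / p := by positivity
  have hcardY : 1 ≤ Fintype.card Y := Fintype.card_pos_iff.mpr ⟨y⟩
  have hbase : (0:ℝ) ≤ (Fintype.card Y : ℝ) - 1 := by
    have : (1:ℝ) ≤ (Fintype.card Y : ℝ) := by exact_mod_cast hcardY
    linarith
  have hC0 : 0 ≤ C := le_trans (Real.rpow_nonneg hbase _) hC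
  by_cases hxx : x = x'
  · subst hxx
    have h1 := chainP_self hp0' x
    have h2 := chainP_nonneg p y y'
    nlinarith
  · have hC1' : 1 ≤ C := by
      rcases hC1 with h | h
      · exact h
      · exact absurd (Subsingleton.elim x x') hxx
    apply le_of_forall_pos_le_add
    intro ε hε
    obtain ⟨r, hrmem, hrlt⟩ := Real.lt_sInf_add_pos (chainSet_nonempty p y y') hε
    obtain ⟨nn, c, h0, hnn, rfl⟩ := hrmem
    obtain ⟨k, hkcard, c', h0', hk', hsum⟩ := shorten (le_of_lt hp0) nn c
    have hc'0 : c' 0 = y := h0'.trans h0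
    have hc'k : c' k = y' := hk'.trans hnn
    have hkR : (k : ℝ) ≤ (Fintype.card Y : ℝ) - 1 := by
      have : (k:ℝ) + 1 ≤ (Fintype.card Y : ℝ) := by exact_mod_cast hkcard
      linarith
    by_cases hk0 : k = 0
    · -- then y = y'
      have hyy : y = y' := by rw [← hc'0, ← hc'k, hk0]
      have hdxx : dist x x' ≤ D := by
        have := hdis (x, y) hx (x', y') hx'
        rw [← hyy] at this
        simp only [dist_self] at this
        rw [sub_zero, abs_of_nonneg dist_nonneg] at this
        exact this
      have h1 := chainP_le_dist hp0 x x'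
      have h2 := chainP_nonneg p y y'
      have h3 : D ≤ C * D := le_mul_of_one_le_left hD hC1'
      linarith
    · -- build the chain in X
      let cX : ℕ → X := fun i => if i = 0 then x else if i = k then x' else (hR.2 (c' i)).choose
      have hmem : ∀ i ≤ k, (cX i, c' i) ∈ R := by
        intro i hik
        by_cases h0i : i = 0
        · subst h0i; simpa [cX, hc'0] using hx
        · by_cases hikk : i = k
          · subst hikk; simpa [cX, h0i, hc'k] using hx'
          · simpa [cX, h0i, hikk] using (hR.2 (c' i)).choose_spec
      have hchain : chainP p x x' ≤
          (∑ i ∈ Finset.range k, dist (cX i) (cX (i + 1)) ^ p) ^ (1 / p) :=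
        chainP_le p (by simp [cX]) (by simp [cX, hk0])
      have hterm : ∀ i ∈ Finset.range k,
          dist (cX i) (cX (i + 1)) ≤ dist (c' i) (c' (i + 1)) + D := by
        intro i hi
        rw [Finset.mem_range] at hi
        have h1 := hdis _ (hmem i (le_of_lt hi)) _ (hmem (i + 1) hi)
        have h2 := abs_le.mp h1
        simp only at h2
        linarith [h2.1, h2.2]
      have hstep1 : (∑ i ∈ Finset.range k, dist (cX i) (cX (i + 1)) ^ p) ^ (1 / p) ≤
          (∑ i ∈ Finset.range k, |dist (c' i) (c' (i + 1)) + D| ^ p) ^ (1 / p) := by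
        apply Real.rpow_le_rpow
        · exact Finset.sum_nonneg fun i _ => Real.rpow_nonneg dist_nonneg _
        · apply Finset.sum_le_sum
          intro i hi
          exact Real.rpow_le_rpow dist_nonneg
            (le_trans (hterm i hi) (le_abs_self _)) (le_of_lt hp0)
        · exact h1p
      have hmink := Real.Lp_add_le (Finset.range k)
        (fun i => dist (c' i) (c' (i + 1))) (fun _ => D) (le_of_lt hp)
      have habs1 : ∀ i : ℕ, |dist (c' i) (c' (i + 1))| = dist (c' i) (c' (i + 1)) :=
        fun i => abs_of_nonneg dist_nonneg
      have hA : (∑ i ∈ Finset.range k, |dist (c' i) (c' (i + 1))| ^ p) ^ (1 / p) ≤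
          chainP p y y' + ε := by
        simp only [habs1]
        have : (∑ i ∈ Finset.range k, dist (c' i) (c' (i + 1)) ^ p) ^ (1 / p) ≤
            (∑ i ∈ Finset.range nn, dist (c i) (c (i + 1)) ^ p) ^ (1 / p) :=
          Real.rpow_le_rpow
            (Finset.sum_nonneg fun i _ => Real.rpow_nonneg dist_nonneg _) hsum h1p
        exact le_trans this (le_of_lt hrlt)
      have hB : (∑ _i ∈ Finset.range k, |D| ^ p) ^ (1 / p) ≤ C * D := by
        rw [abs_of_nonneg hD, Finset.sum_const, Finset.card_range, nsmul_eq_mul,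
          Real.mul_rpow (by positivity) (Real.rpow_nonneg hD _),
          ← Real.rpow_mul hD, mul_one_div_cancel hp0', Real.rpow_one]
        apply mul_le_mul_of_nonneg_right _ hD
        calc (k:ℝ) ^ (1/p)
            ≤ ((Fintype.card Y : ℝ) - 1) ^ (1/p) :=
              Real.rpow_le_rpow (by positivity) hkR h1p
          _ ≤ C := hC
      calc chainP p x x' ≤ _ := hchain
        _ ≤ _ := hstep1
        _ ≤ _ := hmink
        _ ≤ (chainP p y y' + ε) + C * D := add_le_add hA hB
        _ = chainP p y y' + C * D + ε := by ring

lemma key_abs {X Y : Type*} [MetricSpace X] [MetricSpace Y] [Fintype X] [Fintype Y]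
    {p : ℝ} (hp : 1 < p) {C D : ℝ} (hD : 0 ≤ D)
    (hCX : ((Fintype.card X : ℝ) - 1) ^ (1 / p) ≤ C)
    (hCY : ((Fintype.card Y : ℝ) - 1) ^ (1 / p) ≤ C)
    (hC1 : 1 ≤ C ∨ (Subsingleton X ∧ Subsingleton Y))
    (R : Set (X × Y)) (hR : IsCorrespondence R)
    (hdis : ∀ a ∈ R, ∀ b ∈ R, |dist a.1 b.1 - dist a.2 b.2| ≤ D)
    {x x' : X} {y y' : Y} (hx : (x, y) ∈ R) (hx' : (x', y') ∈ R) :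
    |chainP p x x' - chainP p y y'| ≤ C * D := by
  rw [abs_sub_le_iff]
  constructor
  · rw [sub_le_iff_le_add, add_comm]
    exact key hp hD hCY (hC1.imp id And.left) R hR hdis hx hx'
  · rw [sub_le_iff_le_add, add_comm]
    have hR' : IsCorrespondence {q : Y × X | (q.2, q.1) ∈ R} :=
      ⟨fun yy => (hR.2 yy).imp fun xx h => h, fun xx => (hR.1 xx).imp fun yy h => h⟩
    exact key hp hD hCX (hC1.imp id And.right) {q : Y × X | (q.2, q.1) ∈ R} hR'
      (fun a ha b hb => by
        have := hdis (a.2, a.1) ha (b.2, b.1) hb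
        simpa [abs_sub_comm] using this)
      (show ((y, x) : Y × X) ∈ _ from hx) (show ((y', x') : Y × X) ∈ _ from hx')

end ChainPAux

open ChainPAux

/-- Stability of the projection `𝔖_p` onto `p`-metric spaces for finite metric spaces:
`d_GH(𝔖_p X, 𝔖_p Y) ≤ (max(m,n) - 1)^(1/p) · d_GH(X,Y)`, where `m = |X|`, `n = |Y|`,
expressed via the infimal distortion of correspondences. -/
theorem chainP_stability (p : ℝ) (hp : 1 < p)
    (X Y : Type)
    [MetricSpace X] [Fintype X] [Nonempty X]
    [MetricSpace Y] [Fintype Y] [Nonempty Y]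
    (m n : ℕ) (hm : Fintype.card X = m) (hn : Fintype.card Y = n) :
    sInf {r : ℝ | ∃ R : Set (X × Y), IsCorrespondence R ∧
        r = sSup {s : ℝ | ∃ a ∈ R, ∃ b ∈ R,
          s = |chainP p a.1 b.1 - chainP p a.2 b.2|}} ≤
      ((max m n : ℝ) - 1) ^ (1 / p) *
        sInf {r : ℝ | ∃ R : Set (X × Y), IsCorrespondence R ∧
          r = sSup {s : ℝ | ∃ a ∈ R, ∃ b ∈ R,
            s = |dist a.1 b.1 - dist a.2 b.2|}} := by
  have hp0 : 0 < p := lt_trans one_pos hp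
  have h1p : 0 ≤ 1 / p := by positivity
  set C : ℝ := ((max m n : ℝ) - 1) ^ (1 / p) with hCdef
  set A : Set ℝ := {r : ℝ | ∃ R : Set (X × Y), IsCorrespondence R ∧
      r = sSup {s : ℝ | ∃ a ∈ R, ∃ b ∈ R,
        s = |chainP p a.1 b.1 - chainP p a.2 b.2|}} with hAdef
  set B : Set ℝ := {r : ℝ | ∃ R : Set (X × Y), IsCorrespondence R ∧
      r = sSup {s : ℝ | ∃ a ∈ R, ∃ b ∈ R,
        s = |dist a.1 b.1 - dist a.2 b.2|}} with hBdef
  have hmX : 1 ≤ m := hm ▸ Fintype.card_pos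
  have hnY : 1 ≤ n := hn ▸ Fintype.card_pos
  have hbase : (0:ℝ) ≤ (max m n : ℝ) - 1 := by
    have h1 : (1:ℝ) ≤ (m:ℝ) := by exact_mod_cast hmX
    have h2 : (m:ℝ) ≤ max (m:ℝ) (n:ℝ) := le_max_left _ _
    linarith
  have hC0 : 0 ≤ C := Real.rpow_nonneg hbase _
  have hCX : ((Fintype.card X : ℝ) - 1) ^ (1 / p) ≤ C := by
    apply Real.rpow_le_rpow
    · have : (1:ℝ) ≤ (Fintype.card X : ℝ) := by exact_mod_cast (hm ▸ hmX)
      linarith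
    · rw [hm]
      have h2 : (m:ℝ) ≤ max (m:ℝ) (n:ℝ) := le_max_left _ _
      linarith
    · exact h1p
  have hCY : ((Fintype.card Y : ℝ) - 1) ^ (1 / p) ≤ C := by
    apply Real.rpow_le_rpow
    · have : (1:ℝ) ≤ (Fintype.card Y : ℝ) := by exact_mod_cast (hn ▸ hnY)
      linarith
    · rw [hn]
      have h2 : (n:ℝ) ≤ max (m:ℝ) (n:ℝ) := le_max_right _ _
      linarith
    · exact h1p
  have hC1 : 1 ≤ C ∨ (Subsingleton X ∧ Subsingleton Y) := by
    by_cases h2 : 2 ≤ max m n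
    · left
      apply Real.one_le_rpow _ h1p
      have h2' : (2:ℝ) ≤ ((max m n : ℕ) : ℝ) := by exact_mod_cast h2
      rw [Nat.cast_max] at h2'
      linarith
    · right
      have hm1 : Fintype.card X ≤ 1 := by omega
      have hn1 : Fintype.card Y ≤ 1 := by omega
      exact ⟨Fintype.card_le_one_iff_subsingleton.mp hm1,
        Fintype.card_le_one_iff_subsingleton.mp hn1⟩
  -- generic facts about distortion sets
  have hfin : ∀ (R : Set (X × Y)) (f : X × Y → X × Y → ℝ),
      ({s : ℝ | ∃ a ∈ R, ∃ b ∈ R, s = f a b}).Finite := by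
    intro R f
    apply Set.Finite.subset (Set.finite_range (fun q : (X × Y) × (X × Y) => f q.1 q.2))
    rintro s ⟨a, _, b, _, rfl⟩
    exact ⟨(a, b), rfl⟩
  have hRne : ∀ (R : Set (X × Y)), IsCorrespondence R → ∃ a, a ∈ R := by
    intro R hR
    obtain ⟨y0, hy0⟩ := hR.1 (Classical.arbitrary X)
    exact ⟨_, hy0⟩
  have hsSup_nonneg : ∀ (R : Set (X × Y)) (f : X × Y → X × Y → ℝ),
      IsCorrespondence R → (∀ a b, 0 ≤ f a b) →
      0 ≤ sSup {s : ℝ | ∃ a ∈ R, ∃ b ∈ R, s = f a b} := by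
    intro R f hR hf
    obtain ⟨a, ha⟩ := hRne R hR
    exact le_trans (hf a a)
      (le_csSup ((hfin R f).bddAbove) ⟨a, ha, a, ha, rfl⟩)
  have hAbdd : BddBelow A := by
    refine ⟨0, ?_⟩
    rintro r ⟨R, hR, rfl⟩
    exact hsSup_nonneg R _ hR (fun a b => abs_nonneg _)
  -- the main estimate: for every r ∈ B, sInf A ≤ C * r
  have hmain : ∀ r ∈ B, sInf A ≤ C * r := by
    rintro r ⟨R, hR, rfl⟩
    set D := sSup {s : ℝ | ∃ a ∈ R, ∃ b ∈ R, s = |dist a.1 b.1 - dist a.2 b.2|} with hDdef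
    have hD : 0 ≤ D := hsSup_nonneg R _ hR (fun a b => abs_nonneg _)
    have hdis : ∀ a ∈ R, ∀ b ∈ R, |dist a.1 b.1 - dist a.2 b.2| ≤ D := by
      intro a ha b hb
      exact le_csSup ((hfin R _).bddAbove) ⟨a, ha, b, hb, rfl⟩
    have hsup : sSup {s : ℝ | ∃ a ∈ R, ∃ b ∈ R,
        s = |chainP p a.1 b.1 - chainP p a.2 b.2|} ≤ C * D := by
      apply Real.sSup_le
      · rintro s ⟨a, ha, b, hb, rfl⟩
        exact key_abs hp hD hCX hCY hC1 R hR hdis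
          (show ((a.1, a.2) : X × Y) ∈ R from ha) (show ((b.1, b.2) : X × Y) ∈ R from hb)
      · exact mul_nonneg hC0 hD
    exact le_trans (csInf_le hAbdd ⟨R, hR, rfl⟩) hsup
  have hBne : B.Nonempty := by
    refine ⟨_, Set.univ, ⟨fun x => ⟨Classical.arbitrary Y, trivial⟩,
      fun y => ⟨Classical.arbitrary X, trivial⟩⟩, rfl⟩
  rcases hC0.eq_or_lt with h | h
  · obtain ⟨r0, hr0⟩ := hBne
    have := hmain r0 hr0
    rw [← h] at this ⊢
    simpa using this
  · have : sInf A / C ≤ sInf B := by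
      apply le_csInf hBne
      intro r hr
      rw [div_le_iff₀ h]
      rw [mul_comm]
      exact hmain r hr
    rw [div_le_iff₀ h] at this
    linarith [this]
end
end

section
/- Let p ∈ [1,∞) and let X, Y be nonempty compact metric spaces satisfying the p-triangle inequality, and set M := max(diam X, diam Y). Then d_GH^{(p)}(X,Y) ≤ ⌈p⌉^{1/⌈p⌉} · (2M)^{1 − 1/⌈p⌉} · ( d_GH(X,Y) )^{1/⌈p⌉}, where ⌈p⌉ denotes the least integer greater than or equal to p. Consequently, for finite p, d_GH^{(p)} and d_GH induce the same topology on the class of compact p-metric spaces of uniformly bounded diameter. -/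
noncomputable section

/-- `Λ_p(a,b) = |a^p - b^p|^(1/p)`. -/
def lambdaP (p a b : ℝ) : ℝ := |a ^ p - b ^ p| ^ (1 / p)

/-- The `p`-distortion of a correspondence between two metric spaces. -/
def pDistortion {X Y : Type*} [MetricSpace X] [MetricSpace Y] (p : ℝ)
    (R : Set (X × Y)) : ℝ :=
  sSup {r : ℝ | ∃ a ∈ R, ∃ b ∈ R, r = lambdaP p (dist a.1 b.1) (dist a.2 b.2)}

/-- The `p`-Gromov–Hausdorff distance `2^(-1/p) · inf_R dis_p(R)`. -/
def dGHp (p : ℝ) (X Y : Type) [MetricSpace X] [MetricSpace Y] : ℝ :=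
  (2 : ℝ) ^ (-(1 / p)) *
    sInf {r : ℝ | ∃ R : Set (X × Y), IsCorrespondence R ∧ r = pDistortion p R}

/-- The Gromov–Hausdorff distance
`d_GH(X,Y) = (1/2) · inf_R sup_{(x,y),(x',y') ∈ R} |d_X(x,x') - d_Y(y,y')|`. -/
def dGH (X Y : Type) [MetricSpace X] [MetricSpace Y] : ℝ :=
  (1 / 2) * sInf {r : ℝ | ∃ R : Set (X × Y), IsCorrespondence R ∧
    r = sSup {s : ℝ | ∃ a ∈ R, ∃ b ∈ R, s = |dist a.1 b.1 - dist a.2 b.2|}}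


lemma myrpow_add_le {x y q : ℝ} (hx : 0 ≤ x) (hy : 0 ≤ y) (hq : 0 ≤ q) (hq1 : q ≤ 1) :
    (x + y) ^ q ≤ x ^ q + y ^ q := by
  lift x to NNReal using hx
  lift y to NNReal using hy
  rw [← NNReal.coe_add, ← NNReal.coe_rpow, ← NNReal.coe_rpow, ← NNReal.coe_rpow,
    ← NNReal.coe_add, NNReal.coe_le_coe]
  exact NNReal.rpow_add_le_add_rpow _ _ hq hq1

lemma mypow_sub_le {n : ℕ} (hn : 0 < n) {M a b : ℝ} (hb : 0 ≤ b) (hba : b ≤ a) (haM : a ≤ M) :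
    a ^ n - b ^ n ≤ (n : ℝ) * (2 * M) ^ (n - 1) * (a - b) := by
  have ha : 0 ≤ a := hb.trans hba
  have hM : 0 ≤ M := ha.trans haM
  have hbM : b ≤ M := hba.trans haM
  rw [← geom_sum₂_mul]
  have hsum : (∑ i ∈ Finset.range n, a ^ i * b ^ (n - 1 - i)) ≤ (n : ℝ) * (2 * M) ^ (n - 1) := by
    calc (∑ i ∈ Finset.range n, a ^ i * b ^ (n - 1 - i))
        ≤ ∑ i ∈ Finset.range n, (2 * M) ^ (n - 1) := by
          apply Finset.sum_le_sum
          intro i hi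
          have hi' : i < n := Finset.mem_range.mp hi
          have h1 : a ^ i * b ^ (n - 1 - i) ≤ M ^ i * M ^ (n - 1 - i) :=
            mul_le_mul (pow_le_pow_left₀ ha haM i) (pow_le_pow_left₀ hb hbM _)
              (pow_nonneg hb _) (pow_nonneg hM _)
          have h2 : M ^ i * M ^ (n - 1 - i) = M ^ (n - 1) := by
            rw [← pow_add]
            congr 1
            omega
          have h3 : M ^ (n - 1) ≤ (2 * M) ^ (n - 1) :=
            pow_le_pow_left₀ hM (by linarith) _
          linarith
      _ = (n : ℝ) * (2 * M) ^ (n - 1) := by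
          rw [Finset.sum_const, Finset.card_range, nsmul_eq_mul]
  exact mul_le_mul_of_nonneg_right hsum (by linarith)

lemma mykey {p : ℝ} (hp : 1 ≤ p) {n : ℕ} (hn : 0 < n) (hpn : p ≤ n) {M a b : ℝ}
    (hb : 0 ≤ b) (hba : b ≤ a) (haM : a ≤ M) :
    lambdaP p a b ≤ ((n : ℝ) * (2 * M) ^ (n - 1) * (a - b)) ^ (1 / (n : ℝ)) := by
  have ha : 0 ≤ a := hb.trans hba
  have hp0 : 0 < p := lt_of_lt_of_le one_pos hp
  have hn0 : (0 : ℝ) < (n : ℝ) := by exact_mod_cast hn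
  have habp : b ^ p ≤ a ^ p := Real.rpow_le_rpow hb hba hp0.le
  have hq0 : 0 < p / n := div_pos hp0 hn0
  have hq1 : p / n ≤ 1 := (div_le_one hn0).mpr hpn
  have hpowle : b ^ n ≤ a ^ n := pow_le_pow_left₀ hb hba n
  have hbn : (0 : ℝ) ≤ b ^ n := pow_nonneg hb n
  -- step A : a^p - b^p ≤ (a^n - b^n)^(p/n)
  have hA : a ^ p - b ^ p ≤ (a ^ n - b ^ n) ^ (p / n) := by
    have h1 : a ^ p = (a ^ n) ^ (p / n) := by
      rw [← Real.rpow_natCast_mul ha n (p / n)]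
      congr 1
      field_simp
    have h2 : b ^ p = (b ^ n) ^ (p / n) := by
      rw [← Real.rpow_natCast_mul hb n (p / n)]
      congr 1
      field_simp
    have h3 : (a ^ n) ^ (p / n) ≤ (a ^ n - b ^ n) ^ (p / n) + (b ^ n) ^ (p / n) := by
      have := myrpow_add_le (x := a ^ n - b ^ n) (y := b ^ n)
        (by linarith) hbn hq0.le hq1
      rwa [sub_add_cancel] at this
    rw [h1, h2]
    linarith
  unfold lambdaP
  rw [abs_of_nonneg (by linarith)]
  calc (a ^ p - b ^ p) ^ (1 / p)
      ≤ ((a ^ n - b ^ n) ^ (p / n)) ^ (1 / p) :=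
        Real.rpow_le_rpow (by linarith) hA (by positivity)
    _ = (a ^ n - b ^ n) ^ (1 / (n : ℝ)) := by
        rw [← Real.rpow_mul (by linarith)]
        congr 1
        field_simp
    _ ≤ ((n : ℝ) * (2 * M) ^ (n - 1) * (a - b)) ^ (1 / (n : ℝ)) :=
        Real.rpow_le_rpow (by linarith) (mypow_sub_le hn hb hba haM) (by positivity)

lemma mysplit {n : ℕ} (hn : 0 < n) {M r : ℝ} (hM : 0 ≤ M) (hr : 0 ≤ r) :
    ((n : ℝ) * (2 * M) ^ (n - 1) * r) ^ (1 / (n : ℝ)) =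
      (n : ℝ) ^ ((1 : ℝ) / (n : ℝ)) * (2 * M) ^ (1 - (1 : ℝ) / (n : ℝ)) * r ^ ((1 : ℝ) / (n : ℝ)) := by
  have hn0 : (0 : ℝ) < (n : ℝ) := by exact_mod_cast hn
  have h2M : (0 : ℝ) ≤ 2 * M := by linarith
  rw [Real.mul_rpow (by positivity) hr, Real.mul_rpow (by positivity) (by positivity)]
  congr 1
  rw [← Real.rpow_natCast (2 * M) (n - 1), ← Real.rpow_mul h2M]
  congr 1
  rw [Nat.cast_sub hn]
  push_cast
  field_simp


def myDis {X Y : Type*} [MetricSpace X] [MetricSpace Y] (R : Set (X × Y)) : ℝ :=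
  sSup {s : ℝ | ∃ a ∈ R, ∃ b ∈ R, s = |dist a.1 b.1 - dist a.2 b.2|}

lemma myDis_bdd {X Y : Type*} [MetricSpace X] [MetricSpace Y] {M : ℝ}
    (hdX : ∀ x x' : X, dist x x' ≤ M) (hdY : ∀ y y' : Y, dist y y' ≤ M) (R : Set (X × Y)) :
    BddAbove {s : ℝ | ∃ a ∈ R, ∃ b ∈ R, s = |dist a.1 b.1 - dist a.2 b.2|} := by
  refine ⟨M, ?_⟩
  rintro s ⟨a, ha, b, hb, rfl⟩
  rw [abs_sub_le_iff]
  constructor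
  · linarith [hdX a.1 b.1, dist_nonneg (x := a.2) (y := b.2)]
  · linarith [hdY a.2 b.2, dist_nonneg (x := a.1) (y := b.1)]

lemma myDis_nonneg {X Y : Type*} [MetricSpace X] [MetricSpace Y] {M : ℝ}
    (hdX : ∀ x x' : X, dist x x' ≤ M) (hdY : ∀ y y' : Y, dist y y' ≤ M)
    {R : Set (X × Y)} (hR : ∃ a, a ∈ R) : 0 ≤ myDis R := by
  obtain ⟨a, ha⟩ := hR
  have h0 : (0 : ℝ) ∈ {s : ℝ | ∃ a ∈ R, ∃ b ∈ R, s = |dist a.1 b.1 - dist a.2 b.2|} :=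
    ⟨a, ha, a, ha, by simp⟩
  exact le_csSup (myDis_bdd hdX hdY R) h0

/-- Hölder equivalence between `d_GH^{(p)}` and `d_GH` on compact `p`-metric spaces:
with `M = max(diam X, diam Y)`,
`d_GH^{(p)}(X,Y) ≤ ⌈p⌉^(1/⌈p⌉) · (2M)^(1 - 1/⌈p⌉) · d_GH(X,Y)^(1/⌈p⌉)`. -/
theorem dGHp_le_dGH_holder (p : ℝ) (hp : 1 ≤ p)
    (X Y : Type)
    [MetricSpace X] [CompactSpace X] [Nonempty X]
    [MetricSpace Y] [CompactSpace Y] [Nonempty Y]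
    (hX : ∀ x y z : X, dist x z ^ p ≤ dist x y ^ p + dist y z ^ p)
    (hY : ∀ x y z : Y, dist x z ^ p ≤ dist x y ^ p + dist y z ^ p) :
    dGHp p X Y ≤
      (⌈p⌉₊ : ℝ) ^ ((1 : ℝ) / (⌈p⌉₊ : ℝ)) *
        (2 * max (Metric.diam (Set.univ : Set X)) (Metric.diam (Set.univ : Set Y))) ^
          (1 - (1 : ℝ) / (⌈p⌉₊ : ℝ)) *
        dGH X Y ^ ((1 : ℝ) / (⌈p⌉₊ : ℝ)) := by
  classical
  have hp0 : 0 < p := by linarith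
  set n := ⌈p⌉₊ with hn_def
  have hn : 0 < n := Nat.ceil_pos.mpr hp0
  have hn0 : (0 : ℝ) < (n : ℝ) := by exact_mod_cast hn
  have hn1 : (1 : ℝ) ≤ (n : ℝ) := by exact_mod_cast hn
  have hpn : p ≤ (n : ℝ) := Nat.le_ceil p
  set M := max (Metric.diam (Set.univ : Set X)) (Metric.diam (Set.univ : Set Y)) with hM_def
  have hM : 0 ≤ M := le_trans Metric.diam_nonneg (le_max_left _ _)
  have hdX : ∀ x x' : X, dist x x' ≤ M := fun x x' =>
    le_trans (Metric.dist_le_diam_of_mem isCompact_univ.isBounded (Set.mem_univ x)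
      (Set.mem_univ x')) (le_max_left _ _)
  have hdY : ∀ y y' : Y, dist y y' ≤ M := fun y y' =>
    le_trans (Metric.dist_le_diam_of_mem isCompact_univ.isBounded (Set.mem_univ y)
      (Set.mem_univ y')) (le_max_right _ _)
  set D := (n : ℝ) ^ ((1 : ℝ) / (n : ℝ)) * (2 * M) ^ (1 - (1 : ℝ) / (n : ℝ)) with hD_def
  have hD0 : 0 ≤ D := mul_nonneg (Real.rpow_nonneg hn0.le _) (Real.rpow_nonneg (by linarith) _)
  -- symmetric pointwise key inequality
  have key : ∀ a b : ℝ, 0 ≤ a → 0 ≤ b → a ≤ M → b ≤ M →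
      lambdaP p a b ≤ D * |a - b| ^ ((1 : ℝ) / (n : ℝ)) := by
    intro a b ha hb haM hbM
    rcases le_total b a with h | h
    · have h1 := mykey hp hn hpn hb h haM
      rw [mysplit hn hM (by linarith)] at h1
      rwa [abs_of_nonneg (by linarith)]
    · have h1 := mykey hp hn hpn ha h hbM
      rw [mysplit hn hM (by linarith)] at h1
      have hsym : lambdaP p a b = lambdaP p b a := by
        unfold lambdaP; rw [abs_sub_comm]
      rw [hsym, abs_sub_comm, abs_of_nonneg (by linarith)]
      exact h1
  -- per-correspondence bound
  have perR : ∀ R : Set (X × Y), IsCorrespondence R →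
      pDistortion p R ≤ D * (myDis R) ^ ((1 : ℝ) / (n : ℝ)) := by
    intro R hR
    have hRne : ∃ a, a ∈ R := by
      obtain ⟨y0, hy0⟩ := hR.1 (Classical.arbitrary X)
      exact ⟨_, hy0⟩
    have hdis0 : 0 ≤ myDis R := myDis_nonneg hdX hdY hRne
    apply Real.sSup_le
    · rintro r ⟨a, ha, b, hb, rfl⟩
      calc lambdaP p (dist a.1 b.1) (dist a.2 b.2)
          ≤ D * |dist a.1 b.1 - dist a.2 b.2| ^ ((1 : ℝ) / (n : ℝ)) :=
            key _ _ dist_nonneg dist_nonneg (hdX _ _) (hdY _ _)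
        _ ≤ D * (myDis R) ^ ((1 : ℝ) / (n : ℝ)) := by
            apply mul_le_mul_of_nonneg_left _ hD0
            exact Real.rpow_le_rpow (abs_nonneg _)
              (le_csSup (myDis_bdd hdX hdY R) ⟨a, ha, b, hb, rfl⟩) (by positivity)
    · exact mul_nonneg hD0 (Real.rpow_nonneg hdis0 _)
  set SP := {r : ℝ | ∃ R : Set (X × Y), IsCorrespondence R ∧ r = pDistortion p R} with hSP_def
  set S := {r : ℝ | ∃ R : Set (X × Y), IsCorrespondence R ∧
    r = sSup {s : ℝ | ∃ a ∈ R, ∃ b ∈ R, s = |dist a.1 b.1 - dist a.2 b.2|}} with hS_def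
  have hSdis : S = {r : ℝ | ∃ R : Set (X × Y), IsCorrespondence R ∧ r = myDis R} := rfl
  have hSPbb : BddBelow SP := by
    refine ⟨0, ?_⟩
    rintro r ⟨R, hR, rfl⟩
    apply Real.sSup_nonneg
    rintro x ⟨a, _, b, _, rfl⟩
    exact Real.rpow_nonneg (abs_nonneg _) _
  have hcorr_univ : IsCorrespondence (Set.univ : Set (X × Y)) :=
    ⟨fun x => ⟨Classical.arbitrary Y, trivial⟩, fun y => ⟨Classical.arbitrary X, trivial⟩⟩
  have hSne : S.Nonempty := ⟨_, Set.univ, hcorr_univ, rfl⟩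
  set I := sInf S with hI_def
  have hI0 : 0 ≤ I := by
    apply Real.sInf_nonneg
    rintro r ⟨R, hR, rfl⟩
    have hRne : ∃ a, a ∈ R := by
      obtain ⟨y0, hy0⟩ := hR.1 (Classical.arbitrary X)
      exact ⟨_, hy0⟩
    exact myDis_nonneg hdX hdY hRne
  set K := (2 : ℝ) ^ (-((1 : ℝ) / (n : ℝ))) * D with hK_def
  have hK0 : 0 ≤ K := mul_nonneg (Real.rpow_nonneg (by norm_num) _) hD0
  -- main inequality per correspondence
  have star : ∀ R : Set (X × Y), IsCorrespondence R →
      dGHp p X Y ≤ K * (myDis R) ^ ((1 : ℝ) / (n : ℝ)) := by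
    intro R hR
    have hRne : ∃ a, a ∈ R := by
      obtain ⟨y0, hy0⟩ := hR.1 (Classical.arbitrary X)
      exact ⟨_, hy0⟩
    have hdis0 : 0 ≤ myDis R := myDis_nonneg hdX hdY hRne
    have hpd0 : 0 ≤ pDistortion p R := by
      apply Real.sSup_nonneg
      rintro x ⟨a, _, b, _, rfl⟩
      exact Real.rpow_nonneg (abs_nonneg _) _
    have h2 : (2 : ℝ) ^ (-(1 / p)) ≤ (2 : ℝ) ^ (-((1 : ℝ) / (n : ℝ))) := by
      apply Real.rpow_le_rpow_of_exponent_le one_le_two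
      have : (1 : ℝ) / (n : ℝ) ≤ 1 / p := one_div_le_one_div_of_le hp0 hpn
      linarith
    calc dGHp p X Y = (2 : ℝ) ^ (-(1 / p)) * sInf SP := rfl
      _ ≤ (2 : ℝ) ^ (-(1 / p)) * pDistortion p R := by
          apply mul_le_mul_of_nonneg_left _ (Real.rpow_nonneg (by norm_num) _)
          exact csInf_le hSPbb ⟨R, hR, rfl⟩
      _ ≤ (2 : ℝ) ^ (-((1 : ℝ) / (n : ℝ))) * pDistortion p R :=
          mul_le_mul_of_nonneg_right h2 hpd0
      _ ≤ (2 : ℝ) ^ (-((1 : ℝ) / (n : ℝ))) * (D * (myDis R) ^ ((1 : ℝ) / (n : ℝ))) :=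
          mul_le_mul_of_nonneg_left (perR R hR) (Real.rpow_nonneg (by norm_num) _)
      _ = K * (myDis R) ^ ((1 : ℝ) / (n : ℝ)) := by rw [hK_def]; ring
  -- take infimum
  have main : dGHp p X Y ≤ K * I ^ ((1 : ℝ) / (n : ℝ)) := by
    apply le_of_forall_pos_le_add
    intro δ hδ
    have hK1 : (0 : ℝ) < K + 1 := by linarith
    set ε := (δ / (K + 1)) ^ n with hε_def
    have hd : 0 < δ / (K + 1) := div_pos hδ hK1
    have hε : 0 < ε := pow_pos hd n
    obtain ⟨r, hrS, hrlt⟩ := Real.lt_sInf_add_pos hSne hε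
    rw [hSdis] at hrS
    obtain ⟨R, hR, rfl⟩ := hrS
    have hRne : ∃ a, a ∈ R := by
      obtain ⟨y0, hy0⟩ := hR.1 (Classical.arbitrary X)
      exact ⟨_, hy0⟩
    have hdis0 : 0 ≤ myDis R := myDis_nonneg hdX hdY hRne
    have hεrpow : ε ^ ((1 : ℝ) / (n : ℝ)) = δ / (K + 1) := by
      rw [hε_def, ← Real.rpow_natCast (δ / (K + 1)) n, ← Real.rpow_mul hd.le,
        mul_one_div, div_self hn0.ne', Real.rpow_one]
    calc dGHp p X Y ≤ K * (myDis R) ^ ((1 : ℝ) / (n : ℝ)) := star R hR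
      _ ≤ K * (I + ε) ^ ((1 : ℝ) / (n : ℝ)) :=
          mul_le_mul_of_nonneg_left
            (Real.rpow_le_rpow hdis0 hrlt.le (by positivity)) hK0
      _ ≤ K * (I ^ ((1 : ℝ) / (n : ℝ)) + ε ^ ((1 : ℝ) / (n : ℝ))) :=
          mul_le_mul_of_nonneg_left
            (myrpow_add_le hI0 hε.le (by positivity) ((div_le_one hn0).mpr hn1)) hK0
      _ = K * I ^ ((1 : ℝ) / (n : ℝ)) + K * ε ^ ((1 : ℝ) / (n : ℝ)) := by ring
      _ ≤ K * I ^ ((1 : ℝ) / (n : ℝ)) + δ := by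
          rw [hεrpow]
          have h1 : K * (δ / (K + 1)) ≤ (K + 1) * (δ / (K + 1)) :=
            mul_le_mul_of_nonneg_right (by linarith) hd.le
          have h2 : (K + 1) * (δ / (K + 1)) = δ := mul_div_cancel₀ δ hK1.ne'
          linarith
  -- rewrite RHS
  have hRHS : (n : ℝ) ^ ((1 : ℝ) / (n : ℝ)) * (2 * M) ^ (1 - (1 : ℝ) / (n : ℝ)) *
      dGH X Y ^ ((1 : ℝ) / (n : ℝ)) = K * I ^ ((1 : ℝ) / (n : ℝ)) := by
    have hdgh : dGH X Y = (1 / 2) * I := rfl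
    rw [hdgh, Real.mul_rpow (by norm_num) hI0]
    have hhalf : ((1 : ℝ) / 2) ^ ((1 : ℝ) / (n : ℝ)) = (2 : ℝ) ^ (-((1 : ℝ) / (n : ℝ))) := by
      rw [Real.rpow_neg (by norm_num), one_div, Real.inv_rpow (by norm_num)]
    rw [hhalf, hK_def, hD_def]
    ring
  rw [hRHS]
  exact main
end
end

section
/- Let p ∈ [1,∞), ε > 0, and let X, Y be nonempty compact metric spaces satisfying the p-triangle inequality. (1) If d_GH^{(p)}(X,Y) < ε, then there exists a map f : X → Y with sup_{x,x'∈X} Λ_p(d_X(x,x'), d_Y(f(x),f(x'))) ≤ 2^{1/p}·ε and such that for every y ∈ Y there exists x ∈ X with d_Y(f(x),y) ≤ 2^{1/p}·ε (i.e., f is a (2^{1/p}ε, p)-isometry). (2) Conversely, if there exists a map f : X → Y with sup_{x,x'∈X} Λ_p(d_X(x,x'), d_Y(f(x),f(x'))) ≤ ε and such that for every y ∈ Y there exists x ∈ X with d_Y(f(x),y) ≤ ε, then d_GH^{(p)}(X,Y) < 2^{1/p}·ε. -/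
noncomputable section

lemma lambdaP_nonneg (p a b : ℝ) : 0 ≤ lambdaP p a b :=
  Real.rpow_nonneg (abs_nonneg _) _

lemma lambdaP_self (p a : ℝ) (hp : 0 < p) : lambdaP p a a = 0 := by
  rw [lambdaP, sub_self, abs_zero, Real.zero_rpow (one_div_ne_zero hp.ne')]

lemma lambdaP_zero_left (p d : ℝ) (hp : 0 < p) (hd : 0 ≤ d) : lambdaP p 0 d = d := by
  rw [lambdaP, Real.zero_rpow hp.ne', zero_sub, abs_neg,
    abs_of_nonneg (Real.rpow_nonneg hd p), ← Real.rpow_mul hd,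
    mul_one_div, div_self hp.ne', Real.rpow_one]

lemma lambdaP_le_of_le (p a b M : ℝ) (hp : 0 < p) (ha : 0 ≤ a) (hb : 0 ≤ b)
    (haM : a ≤ M) (hbM : b ≤ M) : lambdaP p a b ≤ (M ^ p + M ^ p) ^ (1 / p) := by
  have h1 : a ^ p ≤ M ^ p := Real.rpow_le_rpow ha haM hp.le
  have h2 : b ^ p ≤ M ^ p := Real.rpow_le_rpow hb hbM hp.le
  have h3 : 0 ≤ a ^ p := Real.rpow_nonneg ha p
  have h4 : 0 ≤ b ^ p := Real.rpow_nonneg hb p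
  exact Real.rpow_le_rpow (abs_nonneg _)
    (abs_le.mpr ⟨by linarith, by linarith⟩) (by positivity)

lemma bddAbove_distSet {X Y : Type} [MetricSpace X] [CompactSpace X]
    [MetricSpace Y] [CompactSpace Y] (p : ℝ) (hp : 0 < p) (R : Set (X × Y)) :
    BddAbove {r : ℝ | ∃ a ∈ R, ∃ b ∈ R, r = lambdaP p (dist a.1 b.1) (dist a.2 b.2)} := by
  set M := max (Metric.diam (Set.univ : Set X)) (Metric.diam (Set.univ : Set Y)) with hM
  refine ⟨(M ^ p + M ^ p) ^ (1 / p), ?_⟩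
  rintro r ⟨a, ha, b, hb, rfl⟩
  exact lambdaP_le_of_le p _ _ M hp dist_nonneg dist_nonneg
    (le_trans (Metric.dist_le_diam_of_mem isCompact_univ.isBounded trivial trivial)
      (le_max_left _ _))
    (le_trans (Metric.dist_le_diam_of_mem isCompact_univ.isBounded trivial trivial)
      (le_max_right _ _))

lemma pDistortion_nonneg {X Y : Type} [MetricSpace X] [CompactSpace X]
    [MetricSpace Y] [CompactSpace Y] (p : ℝ) (hp : 0 < p) (R : Set (X × Y))
    (hR : R.Nonempty) : 0 ≤ pDistortion p R := by
  obtain ⟨a, ha⟩ := hR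
  have h0 : (0 : ℝ) ∈ {r : ℝ | ∃ a ∈ R, ∃ b ∈ R, r = lambdaP p (dist a.1 b.1) (dist a.2 b.2)} :=
    ⟨a, ha, a, ha, by rw [dist_self, dist_self]; exact (lambdaP_self p 0 hp).symm⟩
  exact le_csSup (bddAbove_distSet p hp R) h0

lemma abs_le_of_lambdaP_le (p a b ε : ℝ) (hp : 0 < p) (h : lambdaP p a b ≤ ε) :
    |a ^ p - b ^ p| ≤ ε ^ p := by
  have h0 : 0 ≤ lambdaP p a b := lambdaP_nonneg p a b
  have := Real.rpow_le_rpow h0 h hp.le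
  rwa [lambdaP, ← Real.rpow_mul (abs_nonneg _), one_div_mul_cancel hp.ne',
    Real.rpow_one] at this

/-- `d_GH^{(p)}` and approximate isometries, for compact `p`-metric spaces:
(1) if `d_GH^{(p)}(X,Y) < ε` then there is a `(2^(1/p)ε, p)`-isometry `X → Y`;
(2) if there is an `(ε,p)`-isometry `X → Y` then `d_GH^{(p)}(X,Y) < 2^(1/p)·ε`. -/
theorem dGHp_approx_isometry (p ε : ℝ) (hp : 1 ≤ p) (hε : 0 < ε)
    (X Y : Type)
    [MetricSpace X] [CompactSpace X] [Nonempty X]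
    [MetricSpace Y] [CompactSpace Y] [Nonempty Y]
    (hX : ∀ x y z : X, dist x z ^ p ≤ dist x y ^ p + dist y z ^ p)
    (hY : ∀ x y z : Y, dist x z ^ p ≤ dist x y ^ p + dist y z ^ p) :
    (dGHp p X Y < ε →
      ∃ f : X → Y,
        (∀ x x' : X, lambdaP p (dist x x') (dist (f x) (f x')) ≤ (2 : ℝ) ^ (1 / p) * ε) ∧
        ∀ y : Y, ∃ x : X, dist (f x) y ≤ (2 : ℝ) ^ (1 / p) * ε) ∧
    ((∃ f : X → Y,
        (∀ x x' : X, lambdaP p (dist x x') (dist (f x) (f x')) ≤ ε) ∧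
        ∀ y : Y, ∃ x : X, dist (f x) y ≤ ε) →
      dGHp p X Y < (2 : ℝ) ^ (1 / p) * ε) := by
  have hp0 : 0 < p := lt_of_lt_of_le one_pos hp
  set c : ℝ := (2 : ℝ) ^ (1 / p) with hc
  have hcpos : 0 < c := Real.rpow_pos_of_pos two_pos _
  have hcinv : (2 : ℝ) ^ (-(1 / p)) = c⁻¹ := by
    rw [Real.rpow_neg (by norm_num : (0:ℝ) ≤ 2)]
  set S : Set ℝ := {r : ℝ | ∃ R : Set (X × Y), IsCorrespondence R ∧ r = pDistortion p R}
    with hSdef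
  have hSne : S.Nonempty :=
    ⟨pDistortion p (Set.univ : Set (X × Y)),
      ⟨Set.univ, ⟨fun x => ⟨Classical.arbitrary Y, trivial⟩,
        fun y => ⟨Classical.arbitrary X, trivial⟩⟩, rfl⟩⟩
  have hSbdd : BddBelow S := by
    refine ⟨0, ?_⟩
    rintro r ⟨R, hR, rfl⟩
    obtain ⟨x⟩ := ‹Nonempty X›
    obtain ⟨y, hy⟩ := hR.1 x
    exact pDistortion_nonneg p hp0 R ⟨(x, y), hy⟩
  constructor
  · intro h
    have h2 : sInf S < c * ε := by
      have h1 : c⁻¹ * sInf S < ε := by rwa [dGHp, hcinv] at h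
      have := mul_lt_mul_of_pos_left h1 hcpos
      rwa [← mul_assoc, mul_inv_cancel₀ hcpos.ne', one_mul] at this
    obtain ⟨r, hrS, hr⟩ := (csInf_lt_iff hSbdd hSne).mp h2
    obtain ⟨R, hR, rfl⟩ := hrS
    choose f hf using hR.1
    refine ⟨f, ?_, ?_⟩
    · intro x x'
      refine le_trans (le_csSup (bddAbove_distSet p hp0 R) ?_) hr.le
      exact ⟨(x, f x), hf x, (x', f x'), hf x', rfl⟩
    · intro y
      obtain ⟨x, hx⟩ := hR.2 y
      refine ⟨x, ?_⟩
      have hmem : lambdaP p (dist x x) (dist (f x) y) ≤ pDistortion p R :=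
        le_csSup (bddAbove_distSet p hp0 R) ⟨(x, f x), hf x, (x, y), hx, rfl⟩
      rw [dist_self, lambdaP_zero_left p _ hp0 dist_nonneg] at hmem
      exact hmem.trans hr.le
  · rintro ⟨f, hdis, hnet⟩
    set R : Set (X × Y) := {q | dist (f q.1) q.2 ≤ ε} with hRdef
    have hcorr : IsCorrespondence R := by
      constructor
      · intro x; exact ⟨f x, by simp [hRdef, hε.le]⟩
      · intro y; obtain ⟨x, hx⟩ := hnet y; exact ⟨x, hx⟩
    have hεp : 0 < ε ^ p := Real.rpow_pos_of_pos hε p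
    -- distortion of R is at most (3 ε^p)^(1/p)
    have hbound : pDistortion p R ≤ (3 * ε ^ p) ^ (1 / p) := by
      apply csSup_le
      · obtain ⟨x⟩ := ‹Nonempty X›
        obtain ⟨y, hy⟩ := hcorr.1 x
        exact ⟨_, (x, y), hy, (x, y), hy, rfl⟩
      rintro r ⟨⟨x, y⟩, hxy, ⟨x', y'⟩, hxy', rfl⟩
      simp only [hRdef, Set.mem_setOf_eq] at hxy hxy'
      have hF : |dist x x' ^ p - dist (f x) (f x') ^ p| ≤ ε ^ p :=
        abs_le_of_lambdaP_le p _ _ ε hp0 (hdis x x')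
      have e1 : dist (f x) y ^ p ≤ ε ^ p := Real.rpow_le_rpow dist_nonneg hxy hp0.le
      have e2 : dist (f x') y' ^ p ≤ ε ^ p := Real.rpow_le_rpow dist_nonneg hxy' hp0.le
      have t1 : dist y y' ^ p ≤ dist y (f x) ^ p + dist (f x) (f x') ^ p + dist (f x') y' ^ p := by
        calc dist y y' ^ p ≤ dist y (f x) ^ p + dist (f x) y' ^ p := hY y (f x) y'
          _ ≤ dist y (f x) ^ p + (dist (f x) (f x') ^ p + dist (f x') y' ^ p) := by
              linarith [hY (f x) (f x') y']
          _ = _ := by ring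
      have t2 : dist (f x) (f x') ^ p ≤
          dist (f x) y ^ p + dist y y' ^ p + dist y' (f x') ^ p := by
        calc dist (f x) (f x') ^ p ≤ dist (f x) y ^ p + dist y (f x') ^ p := hY (f x) y (f x')
          _ ≤ dist (f x) y ^ p + (dist y y' ^ p + dist y' (f x') ^ p) := by
              linarith [hY y y' (f x')]
          _ = _ := by ring
      rw [dist_comm y (f x)] at t1
      rw [dist_comm y' (f x')] at t2
      have habs : |dist x x' ^ p - dist y y' ^ p| ≤ 3 * ε ^ p := by
        rw [abs_le] at hF ⊢
        constructor <;> nlinarith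
      exact Real.rpow_le_rpow (abs_nonneg _) habs (by positivity)
    have hstrict : (3 * ε ^ p) ^ (1 / p) < c * (c * ε) := by
      have h4 : ((2 : ℝ) * 2 * ε ^ p) ^ (1 / p) = c * (c * ε) := by
        rw [Real.mul_rpow (by positivity) hεp.le,
          Real.mul_rpow (by norm_num : (0:ℝ) ≤ 2) (by norm_num : (0:ℝ) ≤ 2),
          ← Real.rpow_mul hε.le, mul_one_div, div_self hp0.ne', Real.rpow_one, mul_assoc]
      rw [← h4]
      apply Real.rpow_lt_rpow (by positivity) (by nlinarith) (by positivity)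
    have hinf : sInf S ≤ pDistortion p R := csInf_le hSbdd ⟨R, hcorr, rfl⟩
    have : sInf S < c * (c * ε) := lt_of_le_of_lt (hinf.trans hbound) hstrict
    have h5 : c⁻¹ * sInf S < c⁻¹ * (c * (c * ε)) := mul_lt_mul_of_pos_left this (by positivity)
    rw [← mul_assoc, inv_mul_cancel₀ hcpos.ne', one_mul] at h5
    rwa [dGHp, hcinv]
end
end

section
/- Let 1 ≤ q < p ≤ ∞. Suppose (X_n) is a sequence of nonempty compact metric spaces each satisfying the p-triangle inequality (for p = ∞, the strong triangle inequality), Y is a nonempty compact metric space satisfying the q-triangle inequality, and d_GH^{(q)}(X_n, Y) → 0 as n → ∞ (equivalently, for every ε > 0 there exist n and a correspondence R between X_n and Y with dis_q(R) ≤ ε). Then Y satisfies the p-triangle inequality; that is, the class of compact p-metric spaces is closed in the class of compact q-metric spaces under d_GH^{(q)}-convergence. -/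
open scoped ENNReal

noncomputable section

/-- The `p`-triangle inequality for `p ∈ [1,∞]`: for `p = ∞` it is the strong triangle
inequality, and for finite `p` it is `d(x,z)^p ≤ d(x,y)^p + d(y,z)^p`. -/
def PTriangle (p : ℝ≥0∞) (X : Type) [MetricSpace X] : Prop :=
  (p = ∞ ∧ ∀ x y z : X, dist x z ≤ max (dist x y) (dist y z)) ∨
  (p ≠ ∞ ∧ ∀ x y z : X, dist x z ^ p.toReal ≤ dist x y ^ p.toReal + dist y z ^ p.toReal)

/-- The set of `lambdaP` values of a correspondence between compact spaces is
bounded above. -/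
lemma bdd_lambda (q : ℝ) (hq : 1 ≤ q) {X Y : Type*} [MetricSpace X] [MetricSpace Y]
    [CompactSpace X] [CompactSpace Y] (R : Set (X × Y)) :
    BddAbove {r : ℝ | ∃ a ∈ R, ∃ b ∈ R, r = lambdaP q (dist a.1 b.1) (dist a.2 b.2)} := by
  have hq0 : 0 < q := lt_of_lt_of_le one_pos hq
  refine ⟨(Metric.diam (Set.univ : Set X) ^ q + Metric.diam (Set.univ : Set Y) ^ q) ^ (1/q), ?_⟩
  rintro r ⟨a, ha, b, hb, rfl⟩
  unfold lambdaP
  refine Real.rpow_le_rpow (abs_nonneg _) ?_ (by positivity)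
  have h1 : dist a.1 b.1 ^ q ≤ Metric.diam (Set.univ : Set X) ^ q :=
    Real.rpow_le_rpow dist_nonneg
      (Metric.dist_le_diam_of_mem Metric.isBounded_of_compactSpace (Set.mem_univ _)
        (Set.mem_univ _)) hq0.le
  have h2 : dist a.2 b.2 ^ q ≤ Metric.diam (Set.univ : Set Y) ^ q :=
    Real.rpow_le_rpow dist_nonneg
      (Metric.dist_le_diam_of_mem Metric.isBounded_of_compactSpace (Set.mem_univ _)
        (Set.mem_univ _)) hq0.le
  have h3 : 0 ≤ dist a.1 b.1 ^ q := Real.rpow_nonneg dist_nonneg _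
  have h4 : 0 ≤ dist a.2 b.2 ^ q := Real.rpow_nonneg dist_nonneg _
  rw [abs_sub_le_iff]
  constructor <;> linarith

/-- A distortion bound gives quantitative closeness of `q`-th powers of distances. -/
lemma close_of_dis (q : ℝ) (hq : 1 ≤ q) {X Y : Type*} [MetricSpace X] [MetricSpace Y]
    [CompactSpace X] [CompactSpace Y] {R : Set (X × Y)} {δ : ℝ}
    (hdis : pDistortion q R ≤ δ) {a b : X × Y} (ha : a ∈ R) (hb : b ∈ R) :
    |dist a.1 b.1 ^ q - dist a.2 b.2 ^ q| ≤ δ ^ q := by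
  have hq0 : 0 < q := lt_of_lt_of_le one_pos hq
  have hmem : lambdaP q (dist a.1 b.1) (dist a.2 b.2) ∈
      {r : ℝ | ∃ a ∈ R, ∃ b ∈ R, r = lambdaP q (dist a.1 b.1) (dist a.2 b.2)} :=
    ⟨a, ha, b, hb, rfl⟩
  have hle : lambdaP q (dist a.1 b.1) (dist a.2 b.2) ≤ δ :=
    le_trans (le_csSup (bdd_lambda q hq R) hmem) hdis
  have h0 : 0 ≤ lambdaP q (dist a.1 b.1) (dist a.2 b.2) :=
    Real.rpow_nonneg (abs_nonneg _) _
  calc |dist a.1 b.1 ^ q - dist a.2 b.2 ^ q|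
      = lambdaP q (dist a.1 b.1) (dist a.2 b.2) ^ q := by
        rw [lambdaP, one_div, Real.rpow_inv_rpow (abs_nonneg _) hq0.ne']
    _ ≤ δ ^ q := Real.rpow_le_rpow h0 hle hq0.le

/-- If `u k ^ q` converges to `a ^ q` then `u k` converges to `a`. -/
lemma tendsto_of_pow_close (q : ℝ) (hq : 1 ≤ q) {a : ℝ} (ha : 0 ≤ a) {u : ℕ → ℝ}
    (hu : ∀ k, 0 ≤ u k) (h : ∀ k : ℕ, |u k ^ q - a ^ q| ≤ 1 / (k + 1)) :
    Filter.Tendsto u Filter.atTop (nhds a) := by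
  have hq0 : 0 < q := lt_of_lt_of_le one_pos hq
  have h1 : Filter.Tendsto (fun k : ℕ => u k ^ q - a ^ q) Filter.atTop (nhds 0) :=
    squeeze_zero_norm h tendsto_one_div_add_atTop_nhds_zero_nat
  have h2 : Filter.Tendsto (fun k : ℕ => u k ^ q) Filter.atTop (nhds (a ^ q)) := by
    have := h1.add (tendsto_const_nhds (x := a ^ q))
    simpa using this
  have h3 : Filter.Tendsto (fun k : ℕ => (u k ^ q) ^ q⁻¹) Filter.atTop
      (nhds ((a ^ q) ^ q⁻¹)) :=
    h2.rpow_const (Or.inr (inv_nonneg.mpr hq0.le))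
  rw [Real.rpow_rpow_inv ha hq0.ne'] at h3
  refine h3.congr fun k => ?_
  rw [Real.rpow_rpow_inv (hu k) hq0.ne']

/-- For `1 ≤ q < p ≤ ∞`, the class of compact `p`-metric spaces is closed in the class
of compact `q`-metric spaces under `d_GH^{(q)}`-convergence: if each `X n` satisfies the
`p`-triangle inequality and `d_GH^{(q)}(X n, Y) → 0`, then `Y` satisfies the `p`-triangle
inequality as well. -/
theorem pMetric_closed_in_qMetric (q : ℝ) (p : ℝ≥0∞)
    (hq : 1 ≤ q) (hqp : ENNReal.ofReal q < p)
    (X : ℕ → Type) [∀ n, MetricSpace (X n)] [∀ n, CompactSpace (X n)]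
    [∀ n, Nonempty (X n)]
    (Y : Type) [MetricSpace Y] [CompactSpace Y] [Nonempty Y]
    (hXp : ∀ n, PTriangle p (X n))
    (hYq : ∀ x y z : Y, dist x z ^ q ≤ dist x y ^ q + dist y z ^ q)
    (hconv : Filter.Tendsto (fun n => dGHp q (X n) Y) Filter.atTop (nhds 0)) :
    PTriangle p Y := by
  have hq0 : 0 < q := lt_of_lt_of_le one_pos hq
  -- key extraction: approximate triples in some `X n`
  have key : ∀ x y z : Y, ∀ ε : ℝ, 0 < ε → ∃ n : ℕ, ∃ x' y' z' : X n,
      |dist x' y' ^ q - dist x y ^ q| ≤ ε ∧ |dist y' z' ^ q - dist y z ^ q| ≤ ε ∧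
      |dist x' z' ^ q - dist x z ^ q| ≤ ε := by
    intro x y z ε hε
    set δ : ℝ := ε ^ q⁻¹ with hδdef
    have hδ : 0 < δ := Real.rpow_pos_of_pos hε _
    have hc0 : (0:ℝ) < (2:ℝ) ^ (-(1/q)) := Real.rpow_pos_of_pos two_pos _
    have hev : ∀ᶠ n in Filter.atTop, dGHp q (X n) Y < (2:ℝ) ^ (-(1/q)) * δ :=
      hconv.eventually (gt_mem_nhds (by positivity))
    obtain ⟨n, hn⟩ := hev.exists
    have hSne : Set.Nonempty
        {r : ℝ | ∃ R : Set (X n × Y), IsCorrespondence R ∧ r = pDistortion q R} :=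
      ⟨pDistortion q (Set.univ : Set (X n × Y)), Set.univ,
        ⟨fun a => ⟨Classical.arbitrary Y, trivial⟩,
         fun b => ⟨Classical.arbitrary (X n), trivial⟩⟩, rfl⟩
    have hinf : sInf {r : ℝ | ∃ R : Set (X n × Y), IsCorrespondence R ∧
        r = pDistortion q R} < δ := by
      rw [dGHp] at hn
      exact (mul_lt_mul_iff_right₀ hc0).mp hn
    obtain ⟨r, ⟨R, hRcorr, rfl⟩, hrlt⟩ := exists_lt_of_csInf_lt hSne hinf
    obtain ⟨x', hx'⟩ := hRcorr.2 x
    obtain ⟨y', hy'⟩ := hRcorr.2 y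
    obtain ⟨z', hz'⟩ := hRcorr.2 z
    have hδq : δ ^ q = ε := Real.rpow_inv_rpow hε.le hq0.ne'
    refine ⟨n, x', y', z', ?_, ?_, ?_⟩
    · have := close_of_dis q hq hrlt.le hx' hy'
      rwa [hδq] at this
    · have := close_of_dis q hq hrlt.le hy' hz'
      rwa [hδq] at this
    · have := close_of_dis q hq hrlt.le hx' hz'
      rwa [hδq] at this
  rcases eq_or_ne p ∞ with hp | hp
  · -- strong triangle inequality case
    left
    refine ⟨hp, fun x y z => ?_⟩
    have hchoice : ∀ k : ℕ, ∃ u v w : ℝ, 0 ≤ u ∧ 0 ≤ v ∧ 0 ≤ w ∧ w ≤ max u v ∧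
        |u ^ q - dist x y ^ q| ≤ 1 / (k + 1) ∧ |v ^ q - dist y z ^ q| ≤ 1 / (k + 1) ∧
        |w ^ q - dist x z ^ q| ≤ 1 / (k + 1) := by
      intro k
      obtain ⟨n, x', y', z', h1, h2, h3⟩ := key x y z (1 / (k + 1)) (by positivity)
      rcases hXp n with ⟨_, hult⟩ | ⟨hne, _⟩
      · exact ⟨dist x' y', dist y' z', dist x' z', dist_nonneg, dist_nonneg, dist_nonneg,
          hult x' y' z', h1, h2, h3⟩
      · exact absurd hp hne
    choose u v w hu hv hw htri h1 h2 h3 using hchoice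
    have limu := tendsto_of_pow_close q hq dist_nonneg hu h1
    have limv := tendsto_of_pow_close q hq dist_nonneg hv h2
    have limw := tendsto_of_pow_close q hq dist_nonneg hw h3
    exact le_of_tendsto_of_tendsto' limw (limu.max limv) htri
  · -- finite `p` case
    right
    refine ⟨hp, fun x y z => ?_⟩
    have ht : q < p.toReal := (ENNReal.ofReal_lt_iff_lt_toReal hq0.le hp).mp hqp
    have ht0 : 0 ≤ p.toReal := le_trans hq0.le ht.le
    set t : ℝ := p.toReal with htdef
    have hchoice : ∀ k : ℕ, ∃ u v w : ℝ, 0 ≤ u ∧ 0 ≤ v ∧ 0 ≤ w ∧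
        w ^ t ≤ u ^ t + v ^ t ∧
        |u ^ q - dist x y ^ q| ≤ 1 / (k + 1) ∧ |v ^ q - dist y z ^ q| ≤ 1 / (k + 1) ∧
        |w ^ q - dist x z ^ q| ≤ 1 / (k + 1) := by
      intro k
      obtain ⟨n, x', y', z', h1, h2, h3⟩ := key x y z (1 / (k + 1)) (by positivity)
      rcases hXp n with ⟨hinf', _⟩ | ⟨_, htri'⟩
      · exact absurd hinf' hp
      · exact ⟨dist x' y', dist y' z', dist x' z', dist_nonneg, dist_nonneg, dist_nonneg,
          htri' x' y' z', h1, h2, h3⟩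
    choose u v w hu hv hw htri h1 h2 h3 using hchoice
    have limu := tendsto_of_pow_close q hq dist_nonneg hu h1
    have limv := tendsto_of_pow_close q hq dist_nonneg hv h2
    have limw := tendsto_of_pow_close q hq dist_nonneg hw h3
    have limut := limu.rpow_const (Or.inr ht0)
    have limvt := limv.rpow_const (Or.inr ht0)
    have limwt := limw.rpow_const (Or.inr ht0)
    exact le_of_tendsto_of_tendsto' limwt (limut.add limvt) htri
end
end

section
/- Let 1 ≤ q < p < ∞ and let a, b, c ≥ 0. Then ( A_q(a,c)^p + A_q(b,c)^p )^{1/p} ≥ A_q( (a^p + b^p)^{1/p}, 2^{1/p}·c ), where A_q(u,v) := (u^q − v^q)^{1/q} if u > v and A_q(u,v) := 0 otherwise. -/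
noncomputable section

/-- The asymmetric `q`-difference: `A_q(u,v) = (u^q - v^q)^(1/q)` if `u > v`, else `0`. -/
def aQ (q u v : ℝ) : ℝ := if v < u then (u ^ q - v ^ q) ^ (1 / q) else 0

lemma aQ_nonneg {q v : ℝ} (hq : 0 < q) (hv : 0 ≤ v) (u : ℝ) : 0 ≤ aQ q u v := by
  unfold aQ
  split_ifs with h
  · exact Real.rpow_nonneg (by nlinarith [Real.rpow_le_rpow hv h.le hq.le]) _
  · exact le_rfl

lemma minkowski2 {r u v w z : ℝ} (hr : 1 ≤ r) (hu : 0 ≤ u) (hv : 0 ≤ v)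
    (hw : 0 ≤ w) (hz : 0 ≤ z) :
    ((u + w) ^ r + (v + z) ^ r) ^ (1 / r) ≤
      (u ^ r + v ^ r) ^ (1 / r) + (w ^ r + z ^ r) ^ (1 / r) := by
  have h := Real.Lp_add_le_of_nonneg (s := (Finset.univ : Finset (Fin 2)))
      (f := ![u, v]) (g := ![w, z]) hr
      (by intro i _; fin_cases i <;> simpa)
      (by intro i _; fin_cases i <;> simpa)
  simpa [Fin.sum_univ_two] using h

/-- For `1 ≤ q < p < ∞` and `a, b, c ≥ 0`,
`(A_q(a,c)^p + A_q(b,c)^p)^(1/p) ≥ A_q((a^p + b^p)^(1/p), 2^(1/p)·c)`. -/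
theorem aQ_pSum_inequality (q p a b c : ℝ) (hq : 1 ≤ q) (hqp : q < p)
    (ha : 0 ≤ a) (hb : 0 ≤ b) (hc : 0 ≤ c) :
    aQ q ((a ^ p + b ^ p) ^ (1 / p)) ((2 : ℝ) ^ (1 / p) * c) ≤
      (aQ q a c ^ p + aQ q b c ^ p) ^ (1 / p) := by
  have hq0 : 0 < q := lt_of_lt_of_le one_pos hq
  have hp0 : 0 < p := lt_trans hq0 hqp
  have hX : 0 ≤ aQ q a c := aQ_nonneg hq0 hc a
  have hY : 0 ≤ aQ q b c := aQ_nonneg hq0 hc b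
  have hXY : 0 ≤ aQ q a c ^ p + aQ q b c ^ p :=
    add_nonneg (Real.rpow_nonneg hX p) (Real.rpow_nonneg hY p)
  rw [show aQ q ((a ^ p + b ^ p) ^ (1 / p)) ((2 : ℝ) ^ (1 / p) * c) =
      if (2 : ℝ) ^ (1 / p) * c < (a ^ p + b ^ p) ^ (1 / p) then
        (((a ^ p + b ^ p) ^ (1 / p)) ^ q - ((2 : ℝ) ^ (1 / p) * c) ^ q) ^ (1 / q)
      else 0 from rfl]
  split_ifs with h
  · -- main case
    set r : ℝ := p / q with hr_def
    have hr1 : 1 < r := (one_lt_div hq0).2 hqp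
    have hr0 : 0 < r := lt_trans one_pos hr1
    set x := a ^ q with hx_def
    set y := b ^ q with hy_def
    set t := c ^ q with ht_def
    have hx0 : 0 ≤ x := Real.rpow_nonneg ha q
    have hy0 : 0 ≤ y := Real.rpow_nonneg hb q
    have ht0 : 0 ≤ t := Real.rpow_nonneg hc q
    have hqr : q * r = p := by rw [hr_def, mul_div_cancel₀ _ hq0.ne']
    have hap : a ^ p = x ^ r := by rw [hx_def, ← Real.rpow_mul ha, hqr]
    have hbp : b ^ p = y ^ r := by rw [hy_def, ← Real.rpow_mul hb, hqr]
    have hsum0 : 0 ≤ a ^ p + b ^ p :=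
      add_nonneg (Real.rpow_nonneg ha p) (Real.rpow_nonneg hb p)
    -- S^q
    have hSq : ((a ^ p + b ^ p) ^ (1 / p)) ^ q = (x ^ r + y ^ r) ^ (1 / r) := by
      rw [← Real.rpow_mul hsum0, hap, hbp]
      congr 1
      rw [hr_def, one_div_div]
      ring
    -- C^q
    have hCq : ((2 : ℝ) ^ (1 / p) * c) ^ q = (2 : ℝ) ^ (1 / r) * t := by
      rw [Real.mul_rpow (Real.rpow_nonneg (by norm_num) _) hc,
        ← Real.rpow_mul (by norm_num : (0:ℝ) ≤ 2)]
      congr 2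
      rw [hr_def, one_div_div]
      ring
    -- aQ q a c ^ p = (x - min x t)^r
    have key : ∀ s : ℝ, 0 ≤ s → aQ q s c ^ p = (s ^ q - min (s ^ q) t) ^ r := by
      intro s hs
      unfold aQ
      split_ifs with hcs
      · have hlt : t < s ^ q := Real.rpow_lt_rpow hc hcs hq0
        rw [min_eq_right hlt.le, ← Real.rpow_mul (by linarith)]
        congr 1
        rw [hr_def]
        field_simp
      · have hle : s ^ q ≤ t := Real.rpow_le_rpow hs (not_lt.1 hcs) hq0.le
        rw [min_eq_left hle, sub_self, Real.zero_rpow hp0.ne', Real.zero_rpow hr0.ne']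
    have hXe := key a ha
    have hYe := key b hb
    -- Minkowski
    have hmx : x = (x - min x t) + min x t := by ring
    have hmy : y = (y - min y t) + min y t := by ring
    have hmink : (x ^ r + y ^ r) ^ (1 / r) ≤
        ((x - min x t) ^ r + (y - min y t) ^ r) ^ (1 / r) +
          ((min x t) ^ r + (min y t) ^ r) ^ (1 / r) := by
      nth_rewrite 1 [hmx, hmy]
      exact minkowski2 hr1.le (by simp [sub_nonneg]) (by simp [sub_nonneg])
        (le_min hx0 ht0) (le_min hy0 ht0)
    have hminb : ((min x t) ^ r + (min y t) ^ r) ^ (1 / r) ≤ (2 : ℝ) ^ (1 / r) * t := by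
      have h1 : (min x t) ^ r + (min y t) ^ r ≤ 2 * t ^ r := by
        have := Real.rpow_le_rpow (le_min hx0 ht0) (min_le_right x t) hr0.le
        have := Real.rpow_le_rpow (le_min hy0 ht0) (min_le_right y t) hr0.le
        linarith
      calc ((min x t) ^ r + (min y t) ^ r) ^ (1 / r)
          ≤ (2 * t ^ r) ^ (1 / r) := Real.rpow_le_rpow
            (add_nonneg (Real.rpow_nonneg (le_min hx0 ht0) r)
              (Real.rpow_nonneg (le_min hy0 ht0) r)) h1 (by positivity)
        _ = (2 : ℝ) ^ (1 / r) * t := by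
            rw [Real.mul_rpow (by norm_num) (Real.rpow_nonneg ht0 r),
              ← Real.rpow_mul ht0, mul_one_div, div_self hr0.ne', Real.rpow_one]
    -- key inequality
    have hK : ((a ^ p + b ^ p) ^ (1 / p)) ^ q - ((2 : ℝ) ^ (1 / p) * c) ^ q ≤
        (aQ q a c ^ p + aQ q b c ^ p) ^ (1 / r) := by
      rw [hSq, hCq, hXe, hYe]
      linarith
    have hpos : 0 ≤ ((a ^ p + b ^ p) ^ (1 / p)) ^ q - ((2 : ℝ) ^ (1 / p) * c) ^ q := by
      have := Real.rpow_le_rpow (mul_nonneg (Real.rpow_nonneg (by norm_num) _) hc) h.le hq0.le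
      linarith
    calc (((a ^ p + b ^ p) ^ (1 / p)) ^ q - ((2 : ℝ) ^ (1 / p) * c) ^ q) ^ (1 / q)
        ≤ (((aQ q a c ^ p + aQ q b c ^ p) ^ (1 / r))) ^ (1 / q) :=
          Real.rpow_le_rpow hpos hK (by positivity)
      _ = (aQ q a c ^ p + aQ q b c ^ p) ^ (1 / p) := by
          rw [← Real.rpow_mul hXY]
          congr 1
          rw [hr_def, one_div_div]
          field_simp
  · exact Real.rpow_nonneg hXY _
end
end

section
/- Let (X,d) be a compact metric space such that for every pair of points x, x' ∈ X there exists a closed connected subset C ⊆ X containing both x and x' whose Hausdorff dimension equals 1. Then for every p ∈ (1,∞) and all x, x' ∈ X one has d^{(p)}(x,x') = 0; that is, every compact 1-connected metric space lies in the kernel of the projection 𝔖_p for every p > 1. -/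
/-!
Since `dimH C = 1 < p`, the `p`-dimensional Hausdorff measure of `C` vanishes, so the compact
set `C` has finite open covers `(U_i)` with `Σ diam (U_i) ^ p` as small as we like. As `C` is
connected, the graph of overlapping members of such a cover joins a set containing `x` to one
containing `x'` by a simple path `i_0, …, i_m`. The chain `x, z_1, …, z_m, x'` with
`z_k ∈ U_{i_{k-1}} ∩ U_{i_k}` has its `k`-th step inside `U_{i_k}`, so its `p`-sum is at most
`Σ_i diam (U_i) ^ p`, and hence `d^{(p)}(x, x') = 0`.
-/

noncomputable section

open Metric Set MeasureTheory Bornology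
open scoped ENNReal NNReal

variable {X ι : Type*}

def overlapGraph (U : ι → Set X) : SimpleGraph ι where
  Adj i j := i ≠ j ∧ (U i ∩ U j).Nonempty
  symm := ⟨fun _ _ h => ⟨h.1.symm, inter_comm (U _) _ ▸ h.2⟩⟩
  loopless := ⟨fun _ h => h.1 rfl⟩

theorem overlapGraph_reachable_of_mem {U : ι → Set X} {i j : ι} {x : X} (hi : x ∈ U i)
    (hj : x ∈ U j) : (overlapGraph U).Reachable i j := by
  by_cases hij : i = j
  · exact hij ▸ .refl i
  · exact SimpleGraph.Adj.reachable ⟨hij, x, hi, hj⟩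

theorem IsPreconnected.exists_reachable_overlapGraph [TopologicalSpace X] {C : Set X}
    (hC : IsPreconnected C) {U : ι → Set X} (hUo : ∀ i, IsOpen (U i)) (hCU : C ⊆ ⋃ i, U i)
    {x x' : X} (hx : x ∈ C) (hx' : x' ∈ C) :
    ∃ i j, x ∈ U i ∧ x' ∈ U j ∧ (overlapGraph U).Reachable i j := by
  refine hC.induction₂' (fun a b => ∃ i j, a ∈ U i ∧ b ∈ U j ∧ (overlapGraph U).Reachable i j)
    (fun a ha => ?_) (fun a b c _ _ _ => ?_) hx hx'
  · obtain ⟨i, hai⟩ := mem_iUnion.1 (hCU ha)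
    filter_upwards [mem_nhdsWithin_of_mem_nhds ((hUo i).mem_nhds hai)] with b hbi
    exact ⟨⟨i, i, hai, hbi, .refl i⟩, ⟨i, i, hbi, hai, .refl i⟩⟩
  · rintro ⟨i, j, hai, hbj, hij⟩ ⟨j', k, hbj', hck, hj'k⟩
    exact ⟨i, k, hai, hck, hij.trans ((overlapGraph_reachable_of_mem hbj hbj').trans hj'k)⟩

section Chains

variable [PseudoMetricSpace X] {p : ℝ}

def chainSum (p : ℝ) (c : ℕ → X) (n : ℕ) : ℝ :=
  ∑ i ∈ Finset.range n, dist (c i) (c (i + 1)) ^ p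

theorem chainSum_nonneg (c : ℕ → X) (n : ℕ) : 0 ≤ chainSum p c n :=
  Finset.sum_nonneg fun _ _ => Real.rpow_nonneg dist_nonneg p

theorem chainSum_cons (x : X) (c : ℕ → X) (n : ℕ) :
    chainSum p (fun | 0 => x | k + 1 => c k) (n + 1) = dist x (c 0) ^ p + chainSum p c n := by
  rw [chainSum, Finset.sum_range_succ', add_comm]
  rfl

theorem exists_chainSum_le_of_walk {U : ι → Set X} (hU : ∀ i, IsBounded (U i)) (hp : 0 ≤ p)
    {i j : ι} (w : (overlapGraph U).Walk i j) {x x' : X} (hx : x ∈ U i) (hx' : x' ∈ U j) :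
    ∃ n c, c 0 = x ∧ c n = x' ∧ chainSum p c n ≤ (w.support.map fun k => diam (U k) ^ p).sum := by
  induction w generalizing x with
  | nil =>
    refine ⟨1, fun | 0 => x | _ + 1 => x', rfl, rfl, ?_⟩
    simpa [chainSum] using Real.rpow_le_rpow dist_nonneg (dist_le_diam_of_mem (hU _) hx hx') hp
  | cons hadj w ih =>
    obtain ⟨z, hzi, hzk⟩ := hadj.2
    obtain ⟨n, c, hc0, hcn, hc⟩ := ih hzk hx'
    refine ⟨n + 1, fun | 0 => x | k + 1 => c k, rfl, hcn, ?_⟩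
    rw [chainSum_cons, hc0, SimpleGraph.Walk.support_cons, List.map_cons, List.sum_cons]
    gcongr
    exact dist_le_diam_of_mem (hU _) hx hzi

theorem IsPreconnected.exists_chainSum_le_of_cover {C : Set X} (hC : IsPreconnected C)
    {U : ι → Set X} {F : Finset ι} (hUo : ∀ i ∈ F, IsOpen (U i))
    (hUb : ∀ i ∈ F, IsBounded (U i)) (hCU : C ⊆ ⋃ i ∈ F, U i) (hp : 0 ≤ p) {x x' : X}
    (hx : x ∈ C) (hx' : x' ∈ C) :
    ∃ n c, c 0 = x ∧ c n = x' ∧ chainSum p c n ≤ ∑ i ∈ F, diam (U i) ^ p := by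
  classical
  let V : F → Set X := fun i => U i
  obtain ⟨i, j, hxi, hx'j, ⟨w⟩⟩ := hC.exists_reachable_overlapGraph (U := V)
    (fun i => hUo i i.2) (by simpa [V, iUnion_subtype] using hCU) hx hx'
  obtain ⟨n, c, hc0, hcn, hc⟩ :=
    exists_chainSum_le_of_walk (U := V) (fun i => hUb i i.2) hp w.toPath.1 hxi hx'j
  refine ⟨n, c, hc0, hcn, hc.trans ?_⟩
  calc (w.toPath.1.support.map fun k => diam (V k) ^ p).sum
      = ∑ k ∈ w.toPath.1.support.toFinset, diam (V k) ^ p :=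
        (List.sum_toFinset _ w.toPath.2.support_nodup).symm
    _ ≤ ∑ k, diam (V k) ^ p :=
        Finset.sum_le_univ_sum_of_nonneg fun k => Real.rpow_nonneg diam_nonneg p
    _ = ∑ i ∈ F, diam (U i) ^ p := Finset.sum_coe_sort F fun i => diam (U i) ^ p

end Chains

section Hausdorff

variable [EMetricSpace X] {p : ℝ}

theorem hausdorffMeasure_eq_zero_of_dimH_lt [MeasurableSpace X] [BorelSpace X] {s : Set X}
    (hp : 0 ≤ p) (h : dimH s < ENNReal.ofReal p) : μH[p] s = 0 := by
  simpa [Real.coe_toNNReal p hp] using hausdorffMeasure_of_dimH_lt (d := p.toNNReal) h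

theorem exists_cover_tsum_ediam_rpow_lt [MeasurableSpace X] [BorelSpace X] {s : Set X}
    (hp : 0 < p) (hs : μH[p] s = 0) {ε : ℝ≥0∞} (hε : 0 < ε) :
    ∃ t : ℕ → Set X, s ⊆ ⋃ n, t n ∧ ∑' n, ediam (t n) ^ p < ε := by
  have hinf : ⨅ (t : ℕ → Set X) (_ : s ⊆ ⋃ n, t n) (_ : ∀ n, ediam (t n) ≤ ⊤),
      ∑' n, ⨆ _ : (t n).Nonempty, ediam (t n) ^ p < ε := by
    refine lt_of_le_of_lt ?_ (hs ▸ hε)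
    rw [Measure.hausdorffMeasure_apply]
    exact le_iSup₂_of_le ⊤ ENNReal.zero_lt_top le_rfl
  simp only [iInf_lt_iff] at hinf
  obtain ⟨t, hst, -, ht⟩ := hinf
  refine ⟨t, hst, lt_of_le_of_lt (ENNReal.tsum_le_tsum fun n => ?_) ht⟩
  rcases (t n).eq_empty_or_nonempty with hn | hn
  · simp [hn, ENNReal.zero_rpow_of_pos hp]
  · exact le_iSup_of_le hn le_rfl

theorem exists_pos_ediam_thickening_rpow_lt (s : Set X) (hp : 0 < p) (hs : ediam s ≠ ⊤)
    {δ : ℝ≥0∞} (hδ : 0 < δ) :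
    ∃ ρ : ℝ≥0, 0 < ρ ∧ ediam (thickening ρ s) ^ p < ediam s ^ p + δ := by
  have hlim : Filter.Tendsto (fun ρ : ℝ≥0 => (ediam s + 2 * ρ) ^ p) (nhds 0)
      (nhds (ediam s ^ p)) := by
    have hcont : Continuous fun ρ : ℝ≥0 => (ediam s + 2 * ρ) ^ p :=
      ENNReal.continuous_rpow_const.comp (continuous_const.add
        ((ENNReal.continuous_const_mul (by simp)).comp ENNReal.continuous_coe))
    simpa using hcont.tendsto 0
  have hlt : ediam s ^ p < ediam s ^ p + δ :=
    ENNReal.lt_add_right (ENNReal.rpow_ne_top_of_nonneg hp.le hs) hδ.ne'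
  obtain ⟨ρ, hρ, hρ0⟩ := ((hlim.eventually (gt_mem_nhds hlt)).filter_mono
    nhdsWithin_le_nhds |>.and (self_mem_nhdsWithin (s := Ioi 0))).exists
  exact ⟨ρ, hρ0, lt_of_le_of_lt (ENNReal.rpow_le_rpow (ediam_thickening_le ρ) hp.le) hρ⟩

theorem IsCompact.exists_finset_isOpen_cover_sum_ediam_rpow_lt [MeasurableSpace X]
    [BorelSpace X] {C : Set X} (hC : IsCompact C) (hp : 0 < p) (hμ : μH[p] C = 0)
    {ε : ℝ≥0∞} (hε : 0 < ε) :
    ∃ (F : Finset ℕ) (U : ℕ → Set X), (∀ i, IsOpen (U i)) ∧ C ⊆ ⋃ i ∈ F, U i ∧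
      ∑ i ∈ F, ediam (U i) ^ p < ε := by
  have hε2 : 0 < ε / 2 := ENNReal.half_pos hε.ne'
  obtain ⟨t, hCt, ht⟩ := exists_cover_tsum_ediam_rpow_lt hp hμ hε2
  obtain ⟨δ, hδ0, hδ⟩ := ENNReal.exists_pos_sum_of_countable' hε2.ne' ℕ
  have htop : ∀ n, ediam (t n) ≠ ⊤ := fun n =>
    (ENNReal.rpow_eq_top_iff_of_pos hp).not.1
      (ne_top_of_le_ne_top (ht.trans_le le_top).ne (ENNReal.le_tsum n))
  choose ρ hρ0 hρ using fun n => exists_pos_ediam_thickening_rpow_lt (t n) hp (htop n) (hδ0 n)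
  let U n := thickening (ρ n) (t n)
  obtain ⟨F, hF⟩ := hC.elim_finite_subcover U (fun n => isOpen_thickening)
    (hCt.trans (iUnion_mono fun n => self_subset_thickening (NNReal.coe_pos.2 (hρ0 n)) _))
  refine ⟨F, U, fun n => isOpen_thickening, hF, ?_⟩
  calc ∑ n ∈ F, ediam (U n) ^ p
      ≤ ∑ n ∈ F, (ediam (t n) ^ p + δ n) := Finset.sum_le_sum fun n _ => (hρ n).le
    _ ≤ ∑' n, (ediam (t n) ^ p + δ n) := ENNReal.sum_le_tsum F
    _ = ∑' n, ediam (t n) ^ p + ∑' n, δ n := ENNReal.tsum_add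
    _ < ε / 2 + ε / 2 := ENNReal.add_lt_add ht hδ
    _ = ε := ENNReal.add_halves ε

end Hausdorff

theorem IsCompact.exists_chainSum_lt_of_hausdorffMeasure_eq_zero [MetricSpace X]
    [MeasurableSpace X] [BorelSpace X] {C : Set X} (hCc : IsCompact C) (hC : IsPreconnected C)
    {p : ℝ} (hp : 0 < p) (hμ : μH[p] C = 0) {x x' : X} (hx : x ∈ C) (hx' : x' ∈ C) {ε : ℝ}
    (hε : 0 < ε) : ∃ n c, c 0 = x ∧ c n = x' ∧ chainSum p c n < ε := by
  obtain ⟨F, U, hUo, hCU, hU⟩ :=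
    hCc.exists_finset_isOpen_cover_sum_ediam_rpow_lt hp hμ (ENNReal.ofReal_pos.2 hε)
  have htop : ∀ i ∈ F, ediam (U i) ^ p ≠ ⊤ := fun i hi =>
    (ENNReal.sum_lt_top.1 (hU.trans ENNReal.ofReal_lt_top) i hi).ne
  have hUb : ∀ i ∈ F, IsBounded (U i) := fun i hi =>
    isBounded_iff_ediam_ne_top.2 ((ENNReal.rpow_eq_top_iff_of_pos hp).not.1 (htop i hi))
  obtain ⟨n, c, hc0, hcn, hc⟩ :=
    hC.exists_chainSum_le_of_cover (fun i _ => hUo i) hUb hCU hp.le hx hx'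
  refine ⟨n, c, hc0, hcn, hc.trans_lt ?_⟩
  calc ∑ i ∈ F, diam (U i) ^ p = (∑ i ∈ F, ediam (U i) ^ p).toReal := by
        simp only [ENNReal.toReal_sum htop, ← ENNReal.toReal_rpow, diam]
    _ < (ENNReal.ofReal ε).toReal := ENNReal.toReal_strict_mono ENNReal.ofReal_ne_top hU
    _ = ε := ENNReal.toReal_ofReal hε.le

theorem chainP_eq_zero_of_forall_exists_chainSum_lt [MetricSpace X] {p : ℝ} (hp : 0 < p)
    {x x' : X} (h : ∀ ε > 0, ∃ n c, c 0 = x ∧ c n = x' ∧ chainSum p c n < ε) :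
    chainP p x x' = 0 := by
  have hnonneg : ∀ r ∈ {r : ℝ | ∃ n c, c 0 = x ∧ c n = x' ∧ chainSum p c n ^ (1 / p) = r},
      0 ≤ r := by
    rintro r ⟨n, c, -, -, rfl⟩
    exact Real.rpow_nonneg (chainSum_nonneg c n) _
  refine le_antisymm (le_of_forall_pos_le_add fun δ hδ => ?_) (Real.sInf_nonneg hnonneg)
  obtain ⟨n, c, hc0, hcn, hc⟩ := h (δ ^ p) (Real.rpow_pos_of_pos hδ p)
  have hlt : chainSum p c n ^ (1 / p) < δ := by
    rwa [one_div, Real.rpow_inv_lt_iff_of_pos (chainSum_nonneg c n) hδ.le hp]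
  rw [zero_add]
  exact (csInf_le ⟨0, hnonneg⟩ ⟨n, c, hc0, hcn, rfl⟩).trans hlt.le

/-- Every compact `1`-connected metric space (any two points lie in a common closed
connected subset of Hausdorff dimension `1`) lies in the kernel of the projection `𝔖_p`
for every `p > 1`: `d^{(p)}(x,x') = 0` for all `x, x'`. -/
theorem oneConnected_in_kernel (X : Type) [MetricSpace X] [CompactSpace X]
    (h1conn : ∀ x x' : X, ∃ C : Set X,
      IsClosed C ∧ IsConnected C ∧ x ∈ C ∧ x' ∈ C ∧ dimH C = 1) :
    ∀ p : ℝ, 1 < p → ∀ x x' : X, chainP p x x' = 0 := by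
  intro p hp x x'
  obtain ⟨C, hCcl, hCconn, hx, hx', hdim⟩ := h1conn x x'
  borelize X
  have hμ : μH[p] C = 0 :=
    hausdorffMeasure_eq_zero_of_dimH_lt (by linarith) (hdim ▸ ENNReal.one_lt_ofReal.2 hp)
  exact chainP_eq_zero_of_forall_exists_chainSum_lt (by linarith) fun ε hε =>
    hCcl.isCompact.exists_chainSum_lt_of_hausdorffMeasure_eq_zero hCconn.isPreconnected
      (by linarith) hμ hx hx' hε
end
end
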